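/- arXiv:1902.03827 — 2 statements merged into one kernel-verified Lean document; each statement's English description precedes it below -/
import Mathlib

section
/- Suppose for a sequence of nonnegative reals a_n with a_n/n → 0 we have Φ_{P}(a_n)/n → 0 (no prominent families for P := P^{[n]}). If additionally the same property holds for Pᵏ (i.e., for each sequence b_n = o(n), Φ_{(P^{[n]})ᵏ}(b_n) = o(n)), then it holds for P^{k+1}: for every sequence a_n = o(n), Φ_{(P^{[n]})^{k+1}}(a_n) = o(n). -/
/-! Write `P^{k+1} = P · P^k` and use the influence bound `Φ_{PQ}(s) ≤ Φ_P(Φ_Q(s)/ε) + εn` with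
`Q = P^k`. By the hypothesis on `P^k`, `g_n := Φ_{P^k}(a_n)/n → 0`; taking `ε_n ≈ √g_n → 0`, the
argument `Φ_{P^k}(a_n)/ε_n ≈ √g_n · n` is still `o(n)`, so the hypothesis on `P` makes the first
term `o(n)`, while the second term `ε_n n` is `o(n)` as well. -/

open Filter

/-- `Φ_P(s)`: the maximum total one-time influence of a set of `s` nodes. -/
noncomputable def Phi {n : ℕ} (P : Matrix (Fin n) (Fin n) ℝ) (s : ℕ) : ℝ :=
  sSup ((fun B : Finset (Fin n) => ∑ i, ∑ j ∈ B, P i j) ''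
    {B : Finset (Fin n) | B.card = s})

/-- Extension of `Φ_P` to nonnegative real arguments: `Φ_P(x) = Φ_P(min ⌊x⌋ n)`. -/
noncomputable def PhiR {n : ℕ} (P : Matrix (Fin n) (Fin n) ℝ) (x : ℝ) : ℝ :=
  Phi P (min ⌊x⌋₊ n)

open Finset Matrix

lemma sum_sum_mul_apply {α R : Type*} [Fintype α] [CommSemiring R] (P Q : Matrix α α R)
    (B : Finset α) : ∑ i, ∑ j ∈ B, (P * Q) i j = ∑ m, (∑ i, P i m) * ∑ j ∈ B, Q m j := by
  simp only [mul_apply, sum_mul, mul_sum]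
  rw [sum_comm]
  exact sum_comm_cycle

lemma card_filter_le_sum_div {ι 𝕜 : Type*} [Field 𝕜] [LinearOrder 𝕜] [IsStrictOrderedRing 𝕜]
    (s : Finset ι) (c : ι → 𝕜) (hc : ∀ i ∈ s, 0 ≤ c i) {ε : 𝕜} (hε : 0 < ε) :
    (#{i ∈ s | ε ≤ c i} : 𝕜) ≤ (∑ i ∈ s, c i) / ε := by
  rw [le_div_iff₀ hε, ← nsmul_eq_mul]
  calc #{i ∈ s | ε ≤ c i} • ε ≤ ∑ i ∈ s with ε ≤ c i, c i :=
        card_nsmul_le_sum _ _ _ fun i hi => (mem_filter.1 hi).2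
    _ ≤ ∑ i ∈ s, c i := sum_le_sum_of_subset_of_nonneg (filter_subset _ _) fun i hi _ => hc i hi

lemma div_le_div_add_of_le_add_mul {𝕜 : Type*} [Field 𝕜] [LinearOrder 𝕜] [IsStrictOrderedRing 𝕜]
    {x y ε : 𝕜} (hε : 0 ≤ ε) (n : ℕ) (h : x ≤ y + ε * n) : x / n ≤ y / n + ε := by
  calc x / n ≤ (y + ε * n) / n := div_le_div_of_nonneg_right h n.cast_nonneg
    _ ≤ y / n + ε := by
      rw [add_div]
      gcongr
      exact div_le_of_le_mul₀ n.cast_nonneg hε le_rfl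

lemma exists_pos_tendsto_zero_and_div_tendsto_zero {g : ℕ → ℝ} (hg_nonneg : ∀ n, 0 ≤ g n)
    (hg : Tendsto g atTop (nhds 0)) :
    ∃ ε : ℕ → ℝ, (∀ n, 0 < ε n) ∧ Tendsto ε atTop (nhds 0) ∧
      Tendsto (fun n => g n / ε n) atTop (nhds 0) := by
  set ε : ℕ → ℝ := fun n => √(g n) + 1 / (n + 1)
  have hε_pos : ∀ n, 0 < ε n := fun n => by positivity
  have hε : Tendsto ε atTop (nhds 0) := by
    simpa only [Real.sqrt_zero, add_zero] using
      hg.sqrt.add tendsto_one_div_add_atTop_nhds_zero_nat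
  refine ⟨ε, hε_pos, hε, squeeze_zero (fun n => div_nonneg (hg_nonneg n) (hε_pos n).le)
    (fun n => ?_) hε⟩
  have hsqrt_le : √(g n) ≤ ε n := le_add_of_nonneg_right (by positivity)
  rw [div_le_iff₀ (hε_pos n), ← Real.mul_self_sqrt (hg_nonneg n)]
  exact mul_self_le_mul_self (Real.sqrt_nonneg _) hsqrt_le

section Phi

variable {n : ℕ} {P Q : Matrix (Fin n) (Fin n) ℝ}

lemma le_phi (P : Matrix (Fin n) (Fin n) ℝ) {s : ℕ} {B : Finset (Fin n)} (hB : #B = s) :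
    ∑ i, ∑ j ∈ B, P i j ≤ Phi P s :=
  le_csSup (Set.toFinite _).bddAbove ⟨B, hB, rfl⟩

lemma phi_le {s : ℕ} (hs : s ≤ n) {c : ℝ}
    (h : ∀ B : Finset (Fin n), #B = s → ∑ i, ∑ j ∈ B, P i j ≤ c) : Phi P s ≤ c := by
  obtain ⟨B, -, hB⟩ := exists_subset_card_eq (s := (univ : Finset (Fin n))) (by simpa using hs)
  exact csSup_le ⟨_, B, hB, rfl⟩ fun _ ⟨B, hB, hsum⟩ => hsum ▸ h B hB

lemma phi_mono (hP : ∀ i j, 0 ≤ P i j) {s t : ℕ} (hst : s ≤ t) (ht : t ≤ n) :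
    Phi P s ≤ Phi P t := by
  refine phi_le (hst.trans ht) fun B hB => ?_
  obtain ⟨C, hBC, -, hC⟩ :=
    exists_subsuperset_card_eq B.subset_univ (hB ▸ hst) (by simpa using ht)
  calc ∑ i, ∑ j ∈ B, P i j ≤ ∑ i, ∑ j ∈ C, P i j :=
        sum_le_sum fun i _ => sum_le_sum_of_subset_of_nonneg hBC fun j _ _ => hP i j
    _ ≤ Phi P t := le_phi P hC

lemma phi_nonneg (hP : ∀ i j, 0 ≤ P i j) {s : ℕ} (hs : s ≤ n) : 0 ≤ Phi P s := by
  obtain ⟨B, -, hB⟩ := exists_subset_card_eq (s := (univ : Finset (Fin n))) (by simpa using hs)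
  exact (sum_nonneg fun i _ => sum_nonneg fun j _ => hP i j).trans (le_phi P hB)

lemma phiR_nonneg (hP : ∀ i j, 0 ≤ P i j) (x : ℝ) : 0 ≤ PhiR P x :=
  phi_nonneg hP (min_le_right _ _)

lemma phi_le_phiR (hP : ∀ i j, 0 ≤ P i j) {t : ℕ} (ht : t ≤ n) {x : ℝ} (hx : (t : ℝ) ≤ x) :
    Phi P t ≤ PhiR P x :=
  phi_mono hP (le_min (Nat.le_floor hx) ht) (min_le_right _ _)

/-- The nodes `m` from which `Q` sends mass at least `ε` into `B` are at most `Φ_Q(#B)/ε` many by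
Markov's inequality and are handled by `Φ_P`; every other node passes on less than an `ε`-fraction
of the mass it receives, and the total column mass of `P` is `n`. -/
theorem phiR_mul_le (hP : P ∈ rowStochastic ℝ (Fin n)) (hQ : Q ∈ rowStochastic ℝ (Fin n))
    (x : ℝ) {ε : ℝ} (hε : 0 < ε) : PhiR (P * Q) x ≤ PhiR P (PhiR Q x / ε) + ε * n := by
  refine phi_le (min_le_right _ _) fun B hB => ?_
  set c : Fin n → ℝ := fun m => ∑ j ∈ B, Q m j
  set w : Fin n → ℝ := fun m => ∑ i, P i m
  set T : Finset (Fin n) := {m | ε ≤ c m}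
  have hc_nonneg (m : Fin n) : 0 ≤ c m := sum_nonneg fun j _ => nonneg_of_mem_rowStochastic hQ
  have hc_le_one (m : Fin n) : c m ≤ 1 :=
    (sum_le_sum_of_subset_of_nonneg B.subset_univ fun j _ _ =>
      nonneg_of_mem_rowStochastic hQ).trans_eq (sum_row_of_mem_rowStochastic hQ m)
  have hw_nonneg (m : Fin n) : 0 ≤ w m := sum_nonneg fun i _ => nonneg_of_mem_rowStochastic hP
  have hw_sum : ∑ m, w m = n := by
    rw [sum_comm]
    simp [sum_row_of_mem_rowStochastic hP]
  have hT : (#T : ℝ) ≤ PhiR Q x / ε :=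
    (card_filter_le_sum_div _ c (fun m _ => hc_nonneg m) hε).trans
      (div_le_div_of_nonneg_right (le_phi Q hB) hε.le)
  have hsplit (m : Fin n) : w m * c m ≤ (if m ∈ T then w m else 0) + ε * w m := by
    by_cases hm : m ∈ T
    · rw [if_pos hm]
      exact (mul_le_of_le_one_right (hw_nonneg m) (hc_le_one m)).trans
        (le_add_of_nonneg_right (mul_nonneg hε.le (hw_nonneg m)))
    · rw [if_neg hm, zero_add, mul_comm]
      exact mul_le_mul_of_nonneg_right (not_le.1 (by simpa [T] using hm)).le (hw_nonneg m)
  calc ∑ i, ∑ j ∈ B, (P * Q) i j = ∑ m, w m * c m := sum_sum_mul_apply P Q B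
    _ ≤ ∑ m, ((if m ∈ T then w m else 0) + ε * w m) := sum_le_sum fun m _ => hsplit m
    _ = ∑ i, ∑ m ∈ T, P i m + ε * n := by
      rw [sum_add_distrib, ← mul_sum, hw_sum, sum_ite_mem, univ_inter, sum_comm]
    _ ≤ PhiR P (PhiR Q x / ε) + ε * n := by
      gcongr
      exact (le_phi P rfl).trans (phi_le_phiR (fun i j => nonneg_of_mem_rowStochastic hP)
        ((card_le_univ T).trans_eq (Fintype.card_fin n)) hT)

end Phi

/-- Induction step: if a sequence of row-stochastic matrices has no prominent
families, and the no-prominent-families property holds for the `k`-th powers,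
then it also holds for the `(k+1)`-th powers. -/
theorem no_prominent_families_step (P : (n : ℕ) → Matrix (Fin n) (Fin n) ℝ)
    (hP_nonneg : ∀ n i j, 0 ≤ P n i j) (hP_row : ∀ (n : ℕ) (i : Fin n), ∑ j, P n i j = 1)
    (k : ℕ)
    (h1 : ∀ a : ℕ → ℝ, (∀ n, 0 ≤ a n) →
      Tendsto (fun n => a n / n) atTop (nhds 0) →
      Tendsto (fun n => PhiR (P n) (a n) / n) atTop (nhds 0))
    (hk : ∀ b : ℕ → ℝ, (∀ n, 0 ≤ b n) →
      Tendsto (fun n => b n / n) atTop (nhds 0) →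
      Tendsto (fun n => PhiR ((P n) ^ k) (b n) / n) atTop (nhds 0)) :
    ∀ a : ℕ → ℝ, (∀ n, 0 ≤ a n) →
      Tendsto (fun n => a n / n) atTop (nhds 0) →
      Tendsto (fun n => PhiR ((P n) ^ (k + 1)) (a n) / n) atTop (nhds 0) := by
  intro a ha_nonneg ha
  have hP (n : ℕ) : P n ∈ rowStochastic ℝ (Fin n) :=
    mem_rowStochastic_iff_sum.2 ⟨hP_nonneg n, hP_row n⟩
  have hPow (n m : ℕ) : P n ^ m ∈ rowStochastic ℝ (Fin n) :=
    (rowStochastic ℝ (Fin n)).pow_mem (hP n) m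
  have hPow_nonneg (n m : ℕ) : ∀ i j, 0 ≤ (P n ^ m) i j := fun _ _ =>
    nonneg_of_mem_rowStochastic (hPow n m)
  obtain ⟨ε, hε_pos, hε, hb⟩ := exists_pos_tendsto_zero_and_div_tendsto_zero
    (fun n => div_nonneg (phiR_nonneg (hPow_nonneg n k) (a n)) n.cast_nonneg) (hk a ha_nonneg ha)
  have hPb := h1 (fun n => PhiR (P n ^ k) (a n) / ε n)
    (fun n => div_nonneg (phiR_nonneg (hPow_nonneg n k) (a n)) (hε_pos n).le)
    (hb.congr fun n => div_right_comm _ _ _)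
  refine squeeze_zero (fun n => div_nonneg (phiR_nonneg (hPow_nonneg n _) _) n.cast_nonneg)
    (fun n => ?_) (by simpa using hPb.add hε)
  rw [pow_succ']
  exact div_le_div_add_of_le_add_mul (hε_pos n).le n <|
    phiR_mul_le (hP n) (hPow n k) (a n) (hε_pos n)
end

section
/- If a sequence of row-stochastic matrices {P^{[n]}} has no prominent families (for every sequence a_n = o(n), Φ_{P^{[n]}}(a_n) = o(n)), then for every fixed k ∈ N the maximum column average of (P^{[n]})ᵏ converges to 0 as n → ∞, i.e., the sequence is finite-time wise. -/
open Filter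

/-!
Write `w` for the vector of column sums of `P`. For row-stochastic `Q` and a set `B`, the total
influence of `B` under `P * Q` is `∑ₗ w l * c l` with `c l = ∑_{j ∈ B} Q l j ∈ [0, 1]` and
`∑ₗ c l ≤ Φ_Q(#B)`. Such a fractional selection of columns is dominated by the integral one that
takes the `m ≥ ∑ c` largest column sums, so `Φ_{PQ}(s) ≤ Φ_P(Φ_Q(s) + 1)`. Now induct on `k`:
if `Φ_{P^k}(1) = o(n)`, then `a n = Φ_{P^k}(1) + 1` is `o(n)` as well, and the absence of
prominent families turns this into `Φ_{P^{k+1}}(1) ≤ Φ_P(a n) = o(n)`.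
-/

open Finset Matrix

section TopSet

variable {ι : Type*} [Fintype ι] [DecidableEq ι]

theorem exists_card_eq_forall_le_of_mem (w : ι → ℝ) {m : ℕ} (hm : m ≤ Fintype.card ι) :
    ∃ B : Finset ι, #B = m ∧ ∀ i ∈ B, ∀ j ∉ B, w j ≤ w i := by
  induction m with
  | zero => exact ⟨∅, by simp⟩
  | succ m ih =>
    obtain ⟨B, hcard, htop⟩ := ih (Nat.le_of_succ_le hm)
    have hBc : Bᶜ.Nonempty := by
      rw [← card_pos, card_compl, hcard]
      omega
    obtain ⟨b, hb, hbmax⟩ := Bᶜ.exists_max_image w hBc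
    have hbB : b ∉ B := mem_compl.1 hb
    refine ⟨insert b B, by rw [card_insert_of_notMem hbB, hcard], fun i hi j hj => ?_⟩
    have hjB : j ∉ B := fun h => hj (mem_insert_of_mem h)
    rcases mem_insert.1 hi with rfl | hiB
    · exact hbmax j (mem_compl.2 hjB)
    · exact htop i hiB j hjB

theorem sum_mul_le_sum_of_forall_le_of_mem {w c : ι → ℝ} {B : Finset ι}
    (hw : ∀ j, 0 ≤ w j) (hc₀ : ∀ j, 0 ≤ c j) (hc₁ : ∀ j, c j ≤ 1) (hc : ∑ j, c j ≤ #B)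
    (hB : ∀ i ∈ B, ∀ j ∉ B, w j ≤ w i) :
    ∑ j, w j * c j ≤ ∑ j ∈ B, w j := by
  obtain ⟨t, ht₀, htB, htBc⟩ : ∃ t, 0 ≤ t ∧ (∀ i ∈ B, t ≤ w i) ∧ ∀ j ∈ Bᶜ, w j ≤ t := by
    rcases Bᶜ.eq_empty_or_nonempty with h | h
    · exact ⟨0, le_rfl, fun i _ => hw i, by simp [h]⟩
    · obtain ⟨j₀, hj₀, hmax⟩ := Bᶜ.exists_max_image w h
      exact ⟨w j₀, hw j₀, fun i hi => hB i hi j₀ (mem_compl.1 hj₀), hmax⟩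
  have hmass : ∑ j ∈ Bᶜ, c j ≤ ∑ j ∈ B, (1 - c j) := by
    rw [sum_sub_distrib, sum_const, nsmul_one]
    linarith [sum_add_sum_compl B c]
  calc ∑ j, w j * c j = ∑ j ∈ B, w j * c j + ∑ j ∈ Bᶜ, w j * c j :=
        (sum_add_sum_compl B _).symm
    _ ≤ ∑ j ∈ B, w j * c j + t * ∑ j ∈ Bᶜ, c j := by
        rw [mul_sum]
        gcongr with j hj
        exacts [hc₀ j, htBc j hj]
    _ ≤ ∑ j ∈ B, w j * c j + t * ∑ j ∈ B, (1 - c j) := by gcongr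
    _ ≤ ∑ j ∈ B, w j * c j + ∑ j ∈ B, w j * (1 - c j) := by
        rw [mul_sum]
        gcongr with j hj
        exacts [sub_nonneg.2 (hc₁ j), htB j hj]
    _ = ∑ j ∈ B, w j := by
        rw [← sum_add_distrib]
        exact sum_congr rfl fun j _ => by ring

end TopSet

section Phi

variable {n : ℕ} {P Q : Matrix (Fin n) (Fin n) ℝ} {s : ℕ}

theorem le_Phi (P : Matrix (Fin n) (Fin n) ℝ) {B : Finset (Fin n)} (hB : #B = s) :
    ∑ i, ∑ j ∈ B, P i j ≤ Phi P s :=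
  le_csSup (((Set.toFinite _).image _).bddAbove) ⟨B, hB, rfl⟩

theorem Phi_le {x : ℝ} (hx : 0 ≤ x) (h : ∀ B : Finset (Fin n), #B = s → ∑ i, ∑ j ∈ B, P i j ≤ x) :
    Phi P s ≤ x :=
  Real.sSup_le (by rintro _ ⟨B, hB, rfl⟩; exact h B hB) hx

theorem Phi_nonneg (hP : ∀ i j, 0 ≤ P i j) (s : ℕ) : 0 ≤ Phi P s :=
  Real.sSup_nonneg <| by
    rintro _ ⟨B, -, rfl⟩
    exact sum_nonneg fun i _ => sum_nonneg fun j _ => hP i j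

theorem Phi_one_le (s : ℕ) : Phi (1 : Matrix (Fin n) (Fin n) ℝ) s ≤ s :=
  Phi_le s.cast_nonneg fun B hB => by
    simp only [one_apply]
    rw [sum_comm]
    simp [hB]

theorem sum_colSum_mul_le_Phi (hP : ∀ i j, 0 ≤ P i j) {c : Fin n → ℝ} (hc₀ : ∀ j, 0 ≤ c j)
    (hc₁ : ∀ j, c j ≤ 1) {m : ℕ} (hm : m ≤ n) (hc : ∑ j, c j ≤ m) :
    ∑ j, (∑ i, P i j) * c j ≤ Phi P m := by
  obtain ⟨B, hcard, htop⟩ :=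
    exists_card_eq_forall_le_of_mem (fun j => ∑ i, P i j) (m := m) (by simpa using hm)
  calc ∑ j, (∑ i, P i j) * c j ≤ ∑ j ∈ B, ∑ i, P i j :=
        sum_mul_le_sum_of_forall_le_of_mem (fun j => sum_nonneg fun i _ => hP i j) hc₀ hc₁
          (hcard ▸ hc) htop
    _ = ∑ i, ∑ j ∈ B, P i j := sum_comm
    _ ≤ Phi P m := le_Phi P hcard

theorem Phi_mul_le_PhiR (hP : ∀ i j, 0 ≤ P i j) (hQ : Q ∈ rowStochastic ℝ (Fin n)) (s : ℕ) :
    Phi (P * Q) s ≤ PhiR P (Phi Q s + 1) := by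
  have hQ₀ : ∀ i j, 0 ≤ Q i j := fun i j => nonneg_of_mem_rowStochastic hQ
  refine Phi_le (Phi_nonneg hP _) fun B hB => ?_
  set c : Fin n → ℝ := fun l => ∑ j ∈ B, Q l j
  have hc₀ : ∀ l, 0 ≤ c l := fun l => sum_nonneg fun j _ => hQ₀ l j
  have hc₁ : ∀ l, c l ≤ 1 := fun l =>
    (sum_le_sum_of_subset_of_nonneg (subset_univ B) fun j _ _ => hQ₀ l j).trans_eq
      (sum_row_of_mem_rowStochastic hQ l)
  have hc_floor : ∑ l, c l ≤ ⌊Phi Q s + 1⌋₊ := by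
    rw [Nat.floor_add_one (Phi_nonneg hQ₀ s), Nat.cast_succ]
    exact (le_Phi Q hB).trans (Nat.lt_floor_add_one _).le
  have hc_n : ∑ l, c l ≤ n := by
    simpa using sum_le_sum fun l (_ : l ∈ univ) => hc₁ l
  have hPQ : ∑ i, ∑ j ∈ B, (P * Q) i j = ∑ l, (∑ i, P i l) * c l := by
    simp only [mul_apply, c, sum_mul_sum]
    exact (sum_congr rfl fun i _ => sum_comm).trans sum_comm
  rw [hPQ]
  exact sum_colSum_mul_le_Phi hP hc₀ hc₁ (min_le_right _ _)
    (by rw [Nat.cast_min]; exact le_min hc_floor hc_n)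

end Phi

/-- If a sequence of row-stochastic matrices has no prominent families, then
for every fixed `k` the maximum column average of `(P^{[n]})ᵏ` (which equals
`Φ_{(P^{[n]})ᵏ}(1)/n`) converges to `0`: the sequence is finite-time wise. -/
theorem no_prominent_families_implies_finite_time_wise
    (P : (n : ℕ) → Matrix (Fin n) (Fin n) ℝ)
    (hP_nonneg : ∀ n i j, 0 ≤ P n i j)
    (hP_row : ∀ (n : ℕ) (i : Fin n), ∑ j, P n i j = 1)
    (h_no_prominent : ∀ a : ℕ → ℝ, (∀ n, 0 ≤ a n) →
      Tendsto (fun n => a n / n) atTop (nhds 0) →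
      Tendsto (fun n => PhiR (P n) (a n) / n) atTop (nhds 0)) :
    ∀ k : ℕ, Tendsto (fun n => Phi ((P n) ^ k) 1 / n) atTop (nhds 0) := by
  have hstoch : ∀ n k, P n ^ k ∈ rowStochastic ℝ (Fin n) := fun n k =>
    pow_mem (mem_rowStochastic_iff_sum.2 ⟨hP_nonneg n, hP_row n⟩) k
  have hPhi₀ : ∀ n k, 0 ≤ Phi (P n ^ k) 1 := fun n k =>
    Phi_nonneg (fun _ _ => nonneg_of_mem_rowStochastic (hstoch n k)) 1
  intro k
  induction k with
  | zero =>
    refine squeeze_zero (fun n => div_nonneg (hPhi₀ n 0) n.cast_nonneg) (fun n => ?_)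
      tendsto_one_div_atTop_nhds_zero_nat
    gcongr
    simpa using Phi_one_le (n := n) 1
  | succ k ih =>
    have ha : Tendsto (fun n : ℕ => (Phi (P n ^ k) 1 + 1) / n) atTop (nhds 0) := by
      simpa [add_div] using ih.add tendsto_one_div_atTop_nhds_zero_nat
    refine squeeze_zero (fun n => div_nonneg (hPhi₀ n (k + 1)) n.cast_nonneg) (fun n => ?_)
      (h_no_prominent _ (fun n => by linarith [hPhi₀ n k]) ha)
    rw [pow_succ']
    gcongr
    exact Phi_mul_le_PhiR (hP_nonneg n) (hstoch n k) 1
end
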